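/- arXiv:2605.12780 — 2 statements merged into one kernel-verified Lean document; each statement's English description precedes it below -/
import Mathlib

section
/- Under PLR and CAL, defining the residual ε = Y − m − τ·(G − r), one has m = μ + τ·r almost surely and E[ε ∣ σ(G) ⊔ σ(p) ⊔ 𝔛] = 0 almost surely; equivalently, Y − m = τ·(G − r) + ε with ε conditionally mean-zero given σ(G) ⊔ σ(p) ⊔ 𝔛. -/
open MeasureTheory Filter

theorem stmt_0
    {Ω : Type*} (𝔛 : MeasurableSpace Ω) {m0 : MeasurableSpace Ω} {P : Measure Ω} [IsProbabilityMeasure P]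
    (h𝔛 : 𝔛 ≤ m0)
    (p G Y : Ω → ℝ) (hp : Measurable p) (hG : Measurable G)
    (hp01 : ∀ ω, p ω ∈ Set.Icc (0:ℝ) 1)
    (hG01 : ∀ ω, G ω = 0 ∨ G ω = 1)
    (hY2 : MemLp Y 2 P)
    (μ : Ω → ℝ) (τ : ℝ) (hμmeas : Measurable[𝔛] μ) (hμint : Integrable μ P)
    (hPLR : condExp (MeasurableSpace.comap G inferInstance ⊔ MeasurableSpace.comap p inferInstance ⊔ 𝔛) P Y
        =ᵐ[P] fun ω => μ ω + τ * G ω)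
    (hCAL : condExp (MeasurableSpace.comap p inferInstance ⊔ 𝔛) P G =ᵐ[P] p)
    :
    (condExp 𝔛 P Y =ᵐ[P] fun ω => μ ω + τ * condExp 𝔛 P p ω) ∧
    (condExp (MeasurableSpace.comap G inferInstance ⊔ MeasurableSpace.comap p inferInstance ⊔ 𝔛) P
        (fun ω => Y ω - condExp 𝔛 P Y ω - τ * (G ω - condExp 𝔛 P p ω))
      =ᵐ[P] 0) := by
  set mG := MeasurableSpace.comap G inferInstance ⊔ MeasurableSpace.comap p inferInstance ⊔ 𝔛 with hmGdef
  set mP := MeasurableSpace.comap p inferInstance ⊔ 𝔛 with hmPdef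
  have hmG_le : mG ≤ m0 := sup_le (sup_le hG.comap_le hp.comap_le) h𝔛
  have hmP_le : mP ≤ m0 := sup_le hp.comap_le h𝔛
  have h𝔛P : 𝔛 ≤ mP := le_sup_right
  have h𝔛G : 𝔛 ≤ mG := le_sup_right
  have hYint : Integrable Y P := hY2.integrable one_le_two
  have hGint : Integrable G P := by
    refine Integrable.mono' (integrable_const (1:ℝ)) hG.aestronglyMeasurable ?_
    filter_upwards with ω
    rcases hG01 ω with h | h <;> simp [h]
  have hGsm : StronglyMeasurable[mG] G :=
    ((@measurable_iff_comap_le _ _ mG _ G).mpr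
      (le_sup_of_le_left le_sup_left)).stronglyMeasurable
  -- Step: E[G|𝔛] = E[p|𝔛]
  have hEG : condExp 𝔛 P G =ᵐ[P] condExp 𝔛 P p :=
    (condExp_condExp_of_le h𝔛P hmP_le).symm.trans (condExp_congr_ae hCAL)
  -- First claim
  have hμce : condExp 𝔛 P μ = μ :=
    condExp_of_stronglyMeasurable h𝔛 hμmeas.stronglyMeasurable hμint
  have hA : condExp 𝔛 P Y =ᵐ[P] fun ω => μ ω + τ * condExp 𝔛 P p ω := by
    have h1 : condExp 𝔛 P Y =ᵐ[P] condExp 𝔛 P (fun ω => μ ω + τ * G ω) :=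
      ((condExp_condExp_of_le h𝔛G hmG_le).symm.trans (condExp_congr_ae hPLR)).trans
        (condExp_congr_ae (by rfl))
    have heq : (fun ω => μ ω + τ * G ω) = μ + τ • G := rfl
    have h2 := condExp_add (m := 𝔛) (μ := P) hμint ((hGint.const_mul τ))
    have h3 := condExp_smul (m := 𝔛) (μ := P) τ G
    rw [heq] at h1
    have h2' : condExp 𝔛 P (μ + τ • G) =ᵐ[P] condExp 𝔛 P μ + condExp 𝔛 P (τ • G) := by
      have : μ + τ • G = μ + fun ω => τ * G ω := rfl
      rw [this]
      exact (condExp_add hμint (hGint.const_mul τ) 𝔛).trans (by rfl)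
    refine h1.trans (h2'.trans ?_)
    filter_upwards [h3, hEG] with ω hω hEGω
    simp only [Pi.add_apply, Pi.smul_apply, smul_eq_mul] at *
    rw [hμce, hω, hEGω]
  refine ⟨hA, ?_⟩
  -- Second claim
  set g : Ω → ℝ := fun ω => condExp 𝔛 P Y ω + τ * (G ω - condExp 𝔛 P p ω) with hgdef
  have hgint : Integrable g P :=
    integrable_condExp.add ((hGint.sub integrable_condExp).const_mul τ)
  have hgsm : StronglyMeasurable[mG] g :=
    (stronglyMeasurable_condExp.mono h𝔛G).add
      ((hGsm.sub (stronglyMeasurable_condExp.mono h𝔛G)).const_mul τ)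
  have hgce : condExp mG P g = g :=
    condExp_of_stronglyMeasurable hmG_le hgsm hgint
  have hfg : (fun ω => Y ω - condExp 𝔛 P Y ω - τ * (G ω - condExp 𝔛 P p ω)) = Y - g := by
    funext ω; simp [hgdef]; ring
  rw [hfg]
  filter_upwards [condExp_sub (m := mG) hYint hgint, hPLR, hA] with ω h1 h2 h3
  rw [h1]
  simp only [Pi.sub_apply, hgce, Pi.zero_apply]
  rw [h2]
  simp only [hgdef, h3]
  ring
end

section
/- Under PLR and CAL, for any threshold t ∈ (0,1), the hard-label numerator satisfies E[(2·G̃ − 1)·(Y − m)] = τ·E[(2·G̃ − 1)·(p − r)], where G̃ = 1{p > t}. -/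
open MeasureTheory Filter

theorem stmt_4
    {Ω : Type*} (𝔛 : MeasurableSpace Ω) {m0 : MeasurableSpace Ω} {P : Measure Ω} [IsProbabilityMeasure P]
    (h𝔛 : 𝔛 ≤ m0)
    (p G Y : Ω → ℝ) (hp : Measurable p) (hG : Measurable G)
    (hp01 : ∀ ω, p ω ∈ Set.Icc (0:ℝ) 1)
    (hG01 : ∀ ω, G ω = 0 ∨ G ω = 1)
    (hY2 : MemLp Y 2 P)
    (μ : Ω → ℝ) (τ : ℝ) (hμmeas : Measurable[𝔛] μ) (hμint : Integrable μ P)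
    (hPLR : condExp (MeasurableSpace.comap G inferInstance ⊔ MeasurableSpace.comap p inferInstance ⊔ 𝔛) P Y
        =ᵐ[P] fun ω => μ ω + τ * G ω)
    (hCAL : condExp (MeasurableSpace.comap p inferInstance ⊔ 𝔛) P G =ᵐ[P] p)
    (t : ℝ) (ht : t ∈ Set.Ioo (0:ℝ) 1) :
    ∫ ω, (2 * (if t < p ω then (1:ℝ) else 0) - 1) * (Y ω - condExp 𝔛 P Y ω) ∂P
      = τ * ∫ ω, (2 * (if t < p ω then (1:ℝ) else 0) - 1) * (p ω - condExp 𝔛 P p ω) ∂P := by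
  classical
  set K : MeasurableSpace Ω := MeasurableSpace.comap p inferInstance ⊔ 𝔛 with hKdef
  set H : MeasurableSpace Ω :=
    MeasurableSpace.comap G inferInstance ⊔ MeasurableSpace.comap p inferInstance ⊔ 𝔛 with hHdef
  have hp0 : Measurable[m0] p := hp
  have hG0 : Measurable[m0] G := hG
  have hpc : MeasurableSpace.comap p inferInstance ≤ m0 := hp.comap_le
  have hGc : MeasurableSpace.comap G inferInstance ≤ m0 := hG.comap_le
  have hK : K ≤ m0 := sup_le hpc h𝔛
  have hH : H ≤ m0 := sup_le (sup_le hGc hpc) h𝔛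
  have hKH : K ≤ H := sup_le (le_sup_of_le_left le_sup_right) le_sup_right
  have h𝔛K : 𝔛 ≤ K := le_sup_right
  have h𝔛H : 𝔛 ≤ H := le_sup_right
  set f : Ω → ℝ := fun ω => 2 * (if t < p ω then (1:ℝ) else 0) - 1 with hfdef
  -- measurability of f
  have hgmeas : Measurable (fun x : ℝ => 2 * (if t < x then (1:ℝ) else 0) - 1) := by
    refine (measurable_const.mul (Measurable.ite ?_ measurable_const measurable_const)).sub
      measurable_const
    exact measurableSet_Ioi
  have hfK : StronglyMeasurable[K] f := by
    have hpK : Measurable[K] p :=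
      (comap_measurable p).mono le_sup_left le_rfl
    exact (hgmeas.comp hpK).stronglyMeasurable
  have hfH : StronglyMeasurable[H] f := hfK.mono hKH
  have hfae : AEStronglyMeasurable[m0] f P := (hfK.mono hK).aestronglyMeasurable
  have hfbd : ∃ C, ∀ ω, ‖f ω‖ ≤ C := by
    refine ⟨1, fun ω => ?_⟩
    by_cases h : t < p ω <;> simp [hfdef, h] <;> norm_num
  -- integrability
  have hYint : Integrable Y P := hY2.integrable one_le_two
  have hpint : Integrable p P := by
    refine (integrable_const (1:ℝ)).mono' hp0.aestronglyMeasurable ?_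
    filter_upwards with ω
    have h1 := (hp01 ω).1
    have h2 := (hp01 ω).2
    rw [Real.norm_eq_abs, abs_le]
    constructor <;> linarith
  have hGint : Integrable G P := by
    refine (integrable_const (1:ℝ)).mono' hG0.aestronglyMeasurable ?_
    filter_upwards with ω
    rcases hG01 ω with h | h <;> simp [h]
  -- the key pull-out identity
  have key : ∀ (m' : MeasurableSpace Ω) (hm' : m' ≤ m0), SigmaFinite (P.trim hm') →
      StronglyMeasurable[m'] f → ∀ Z : Ω → ℝ, Integrable Z P →
      ∫ ω, f ω * Z ω ∂P = ∫ ω, f ω * condExp m' P Z ω ∂P := by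
    intro m' hm' hsf hfm Z hZ
    haveI := hsf
    have hint : Integrable (f * Z) P := hZ.bdd_mul hfae (Filter.Eventually.of_forall hfbd.choose_spec)
    calc ∫ ω, f ω * Z ω ∂P = ∫ ω, condExp m' P (f * Z) ω ∂P :=
          (integral_condExp hm').symm
      _ = ∫ ω, (f * condExp m' P Z) ω ∂P :=
          integral_congr_ae (condExp_mul_of_stronglyMeasurable_left hfm hint hZ)
      _ = ∫ ω, f ω * condExp m' P Z ω ∂P := rfl
  set mY : Ω → ℝ := condExp 𝔛 P Y with hmYdef
  set r : Ω → ℝ := condExp 𝔛 P p with hrdef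
  -- E[G | 𝔛] = r  a.e.
  have hG𝔛 : condExp 𝔛 P G =ᵐ[P] r := by
    calc condExp 𝔛 P G =ᵐ[P] condExp 𝔛 P (condExp K P G) :=
          (condExp_condExp_of_le h𝔛K hK).symm
      _ =ᵐ[P] condExp 𝔛 P p := condExp_congr_ae hCAL
      _ = r := rfl
  -- mY = μ + τ r a.e.
  have hmY : mY =ᵐ[P] fun ω => μ ω + τ * r ω := by
    have step1 : mY =ᵐ[P] condExp 𝔛 P (condExp H P Y) :=
      (condExp_condExp_of_le h𝔛H hH).symm
    have step2 : condExp 𝔛 P (condExp H P Y) =ᵐ[P] condExp 𝔛 P (fun ω => μ ω + τ * G ω) :=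
      condExp_congr_ae hPLR
    have hτG : Integrable (fun ω => τ * G ω) P := hGint.const_mul τ
    have step3 : condExp 𝔛 P (fun ω => μ ω + τ * G ω) =ᵐ[P]
        condExp 𝔛 P μ + condExp 𝔛 P (fun ω => τ * G ω) := condExp_add hμint hτG 𝔛
    have hμc : condExp 𝔛 P μ = μ :=
      condExp_of_stronglyMeasurable h𝔛 hμmeas.stronglyMeasurable hμint
    have step4 : condExp 𝔛 P (fun ω => τ * G ω) =ᵐ[P] fun ω => τ * condExp 𝔛 P G ω :=
      condExp_smul (μ := P) (m := 𝔛) τ G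
    filter_upwards [step1, step2, step3, step4, hG𝔛] with ω h1 h2 h3 h4 h5
    rw [h1, h2, h3]
    simp only [Pi.add_apply, hμc, h4, h5]
  -- Step 1 : LHS as an integral against E[· | H]
  have hYmint : Integrable (fun ω => Y ω - mY ω) P := hYint.sub integrable_condExp
  have h1 : ∫ ω, f ω * (Y ω - mY ω) ∂P
      = ∫ ω, f ω * condExp H P (fun ω => Y ω - mY ω) ω ∂P :=
    key H hH inferInstance hfH _ hYmint
  -- conditional expectation of Y - mY given H
  have h2 : condExp H P (fun ω => Y ω - mY ω) =ᵐ[P] fun ω => τ * (G ω - r ω) := by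
    have hsub : condExp H P (fun ω => Y ω - mY ω) =ᵐ[P] condExp H P Y - condExp H P mY :=
      condExp_sub hYint integrable_condExp H
    have hmYH : condExp H P mY = mY :=
      condExp_of_stronglyMeasurable hH (stronglyMeasurable_condExp.mono h𝔛H) integrable_condExp
    filter_upwards [hsub, hPLR, hmY] with ω hs hplr hm
    rw [hs]
    simp only [Pi.sub_apply, hmYH, hplr, hm]
    ring
  -- integrals with f against G and p
  have hfG : Integrable (fun ω => f ω * G ω) P := hGint.bdd_mul hfae (Filter.Eventually.of_forall hfbd.choose_spec)
  have hfp : Integrable (fun ω => f ω * p ω) P := hpint.bdd_mul hfae (Filter.Eventually.of_forall hfbd.choose_spec)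
  have hfr : Integrable (fun ω => f ω * r ω) P := integrable_condExp.bdd_mul hfae (Filter.Eventually.of_forall hfbd.choose_spec)
  have hfGp : ∫ ω, f ω * G ω ∂P = ∫ ω, f ω * p ω ∂P := by
    rw [key K hK inferInstance hfK G hGint]
    exact integral_congr_ae (by filter_upwards [hCAL] with ω h; rw [h])
  -- compute LHS
  have hLHS : ∫ ω, f ω * (Y ω - mY ω) ∂P = τ * (∫ ω, f ω * p ω ∂P - ∫ ω, f ω * r ω ∂P) := by
    rw [h1, integral_congr_ae (by filter_upwards [h2] with ω h; rw [h] :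
      (fun ω => f ω * condExp H P (fun ω => Y ω - mY ω) ω) =ᵐ[P]
        fun ω => f ω * (τ * (G ω - r ω)))]
    have : ∀ ω, f ω * (τ * (G ω - r ω)) = τ * (f ω * G ω - f ω * r ω) := by
      intro ω; ring
    simp_rw [this]
    rw [integral_const_mul, integral_sub hfG hfr, hfGp]
  -- compute RHS
  have hRHS : ∫ ω, f ω * (p ω - r ω) ∂P = ∫ ω, f ω * p ω ∂P - ∫ ω, f ω * r ω ∂P := by
    have : ∀ ω, f ω * (p ω - r ω) = f ω * p ω - f ω * r ω := by intro ω; ring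
    simp_rw [this]
    exact integral_sub hfp hfr
  show ∫ ω, f ω * (Y ω - mY ω) ∂P = τ * ∫ ω, f ω * (p ω - r ω) ∂P
  rw [hLHS, hRHS]
end
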